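/- Let k be a commutative ring and let M(n) denote the 𝒞-module [r] ↦ free k-module on strictly increasing maps [n] → [r]. Let 𝔄M(n) be the submodule generated by differences α·x − β·x for parallel morphisms α, β. Then for each r ≥ n, the map sending every strictly increasing [n] → [r] to 1 ∈ k induces an isomorphism (M(n)/𝔄M(n))_r ≅ k, and under these identifications the transition maps induced by the inclusions [r] → [r+1] are the identity; hence the colimit of the system (M(n)/𝔄M(n))_r over r is isomorphic to k. -/
import Mathlib


variable (k : Type) [CommRing k]

/-- The value `M(n)_r` of the representable `𝒞`-module `M(n)`: the free `k`-module on
the strictly increasing maps `[n] → [r]`. -/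
abbrev MVal (n r : ℕ) : Type := (Fin n ↪o Fin r) →₀ k

/-- The value `(𝔄M(n))_r` of the submodule generated by differences `α·x - β·x` for
parallel morphisms `α, β` (`𝔄` is the augmentation ideal). -/
noncomputable def AugSub (n r : ℕ) : Submodule k (MVal k n r) :=
  Submodule.span k
    {x | ∃ (m : ℕ) (γ : Fin n ↪o Fin m) (a b : Fin m ↪o Fin r),
      x = Finsupp.single (γ.trans a) 1 - Finsupp.single (γ.trans b) 1}

/-- The `k`-linear map `M(n)_r → k` sending each strictly increasing map `[n] → [r]`
to `1 ∈ k` (the sum of coefficients). -/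
noncomputable def eps (n r : ℕ) : MVal k n r →ₗ[k] k :=
  Finsupp.lsum k fun _ => (LinearMap.id : k →ₗ[k] k)

/-- for `r ≥ n`, the map `eps` induces an isomorphism
`(M(n)/𝔄M(n))_r ≅ k` (it is surjective with kernel `(𝔄M(n))_r`), and under these
identifications the transition maps induced by the inclusions `[r] → [r+1]` are the
identity; hence the colimit over `r` of `(M(n)/𝔄M(n))_r` is isomorphic to `k`. -/
theorem augmentation_quotient_colimit (n r : ℕ) (hnr : n ≤ r) :
    LinearMap.ker (eps k n r) = AugSub k n r ∧
    Function.Surjective (eps k n r) ∧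
    Nonempty ((MVal k n r ⧸ AugSub k n r) ≃ₗ[k] k) ∧
    (∀ x : MVal k n r,
      eps k n (r + 1) (Finsupp.mapDomain (fun f => f.trans Fin.castSuccOrderEmb) x) =
        eps k n r x) := by
  classical
  have heps_single : ∀ (f : Fin n ↪o Fin r) (c : k),
      eps k n r (Finsupp.single f c) = c := by
    intro f c; simp [eps]
  have hepsx : ∀ x : MVal k n r, eps k n r x = ∑ a ∈ x.support, x a := by
    intro x; simp [eps, Finsupp.sum]
  -- generators
  have hgen : ∀ f g : Fin n ↪o Fin r,
      Finsupp.single f (1:k) - Finsupp.single g 1 ∈ AugSub k n r := by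
    intro f g
    apply Submodule.subset_span
    refine ⟨n, RelEmbedding.refl _, f, g, ?_⟩
    have h1 : (RelEmbedding.refl ((· ≤ ·) : Fin n → Fin n → Prop)).trans f = f := by
      ext x; rfl
    have h2 : (RelEmbedding.refl ((· ≤ ·) : Fin n → Fin n → Prop)).trans g = g := by
      ext x; rfl
    rw [h1, h2]
  have hle : AugSub k n r ≤ LinearMap.ker (eps k n r) := by
    rw [AugSub, Submodule.span_le]
    rintro x ⟨m, γ, a, b, rfl⟩
    simp [LinearMap.mem_ker, heps_single]
  set f0 : Fin n ↪o Fin r := Fin.castLEOrderEmb hnr with hf0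
  have hker : LinearMap.ker (eps k n r) = AugSub k n r := by
    refine le_antisymm ?_ hle
    intro x hx
    rw [LinearMap.mem_ker] at hx
    have hsum : ∑ a ∈ x.support, x a = 0 := by rw [← hepsx]; exact hx
    have hrep : x = ∑ a ∈ x.support, x a • (Finsupp.single a (1:k) - Finsupp.single f0 1) := by
      rw [Finset.sum_congr rfl (fun a _ => smul_sub (x a) (Finsupp.single a (1:k))
        (Finsupp.single f0 1)), Finset.sum_sub_distrib, ← Finset.sum_smul, hsum, zero_smul,
        sub_zero]
      conv_lhs => rw [← Finsupp.sum_single x]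
      rw [Finsupp.sum]
      exact Finset.sum_congr rfl fun a _ => by
        rw [Finsupp.smul_single, smul_eq_mul, mul_one]
    rw [hrep]
    exact Submodule.sum_mem _ fun a _ => Submodule.smul_mem _ _ (hgen a f0)
  have hsurj : Function.Surjective (eps k n r) := by
    intro c
    exact ⟨Finsupp.single f0 c, heps_single f0 c⟩
  refine ⟨hker, hsurj, ⟨?_⟩, ?_⟩
  · exact (Submodule.quotEquivOfEq _ _ hker.symm).trans
      (LinearMap.quotKerEquivOfSurjective _ hsurj)
  · intro x
    simp only [eps, Finsupp.lsum_apply, LinearMap.id_coe, id_eq]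
    exact Finsupp.sum_mapDomain_index (fun _ => rfl) (fun _ _ _ => rfl)
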